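/- Let L be a function from n×n complex matrices to the real numbers satisfying: (i) 0 ≤ L(M) ≤ L(N) whenever 0 ≤ M ≤ N in the Loewner order; and (ii) |L(M*N)|² ≤ L(M*M)·L(N*N) for all M, N. Then for all positive definite n×n matrices P and Q, L(P # Q) ≤ √(L(P)·L(Q)). -/

import Mathlib

open Matrix ComplexOrder
open scoped Classical

set_option maxHeartbeats 1000000

namespace Matrix.PosSemidef

/-- The square root of a positive semidefinite matrix, as in Mathlib of December 2024
(removed from current Mathlib). -/
noncomputable def sqrt {m 𝕜 : Type*} [Fintype m] [DecidableEq m] [RCLike 𝕜]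
    {A : Matrix m m 𝕜} (hA : PosSemidef A) : Matrix m m 𝕜 :=
  hA.1.eigenvectorUnitary.1 * diagonal ((↑) ∘ (√·) ∘ hA.1.eigenvalues) *
    (star hA.1.eigenvectorUnitary : Matrix m m 𝕜)

lemma posSemidef_sqrt {m 𝕜 : Type*} [Fintype m] [DecidableEq m] [RCLike 𝕜]
    {A : Matrix m m 𝕜} (hA : PosSemidef A) : PosSemidef hA.sqrt := by
  apply PosSemidef.mul_mul_conjTranspose_same
  refine posSemidef_diagonal_iff.mpr fun i ↦ ?_
  rw [Function.comp_apply, RCLike.nonneg_iff]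
  constructor
  · simp only [RCLike.ofReal_re]
    exact Real.sqrt_nonneg _
  · simp only [RCLike.ofReal_im]

lemma sqrt_mul_self {m 𝕜 : Type*} [Fintype m] [DecidableEq m] [RCLike 𝕜]
    {A : Matrix m m 𝕜} (hA : PosSemidef A) : hA.sqrt * hA.sqrt = A := by
  have hU : (star hA.1.eigenvectorUnitary : Matrix m m 𝕜) * hA.1.eigenvectorUnitary.1 = 1 :=
    Unitary.star_mul_self_of_mem hA.1.eigenvectorUnitary.2
  conv_rhs => rw [hA.1.spectral_theorem, Unitary.conjStarAlgAut_apply]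
  unfold sqrt
  have hD : diagonal ((↑) ∘ (√·) ∘ hA.1.eigenvalues) * diagonal ((↑) ∘ (√·) ∘ hA.1.eigenvalues)
      = diagonal (RCLike.ofReal ∘ hA.1.eigenvalues : m → 𝕜) := by
    rw [diagonal_mul_diagonal]
    congr 1
    funext i
    simp only [Function.comp_apply]
    rw [← RCLike.ofReal_mul, Real.mul_self_sqrt (hA.eigenvalues_nonneg i)]
  calc _ = hA.1.eigenvectorUnitary.1 * diagonal ((↑) ∘ (√·) ∘ hA.1.eigenvalues) *
        ((star hA.1.eigenvectorUnitary : Matrix m m 𝕜) * hA.1.eigenvectorUnitary.1) *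
        diagonal ((↑) ∘ (√·) ∘ hA.1.eigenvalues) *
        (star hA.1.eigenvectorUnitary : Matrix m m 𝕜) := by simp only [mul_assoc]
    _ = _ := by rw [hU, mul_one, mul_assoc _ (diagonal _) (diagonal _), hD]

end Matrix.PosSemidef

/-- The geometric mean `P # Q = P^{1/2} (P^{-1/2} Q P^{-1/2})^{1/2} P^{1/2}` of two
positive definite complex matrices (junk value `0` if `P` or `Q` is not positive definite). -/
noncomputable def geomMean {n : ℕ} (P Q : Matrix (Fin n) (Fin n) ℂ) :
    Matrix (Fin n) (Fin n) ℂ :=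
  if h : P.PosDef ∧ Q.PosDef then
    have hs : ((h.1.posSemidef.sqrt⁻¹) * Q * (h.1.posSemidef.sqrt⁻¹)).PosSemidef := by
      have h1 := h.2.posSemidef.conjTranspose_mul_mul_same (h.1.posSemidef.sqrt⁻¹)
      rwa [Matrix.conjTranspose_nonsing_inv, h.1.posSemidef.posSemidef_sqrt.1.eq] at h1
    h.1.posSemidef.sqrt * hs.sqrt * h.1.posSemidef.sqrt
  else 0

theorem stmt12 {n : ℕ} (L : Matrix (Fin n) (Fin n) ℂ → ℝ)
    (h1 : ∀ M N : Matrix (Fin n) (Fin n) ℂ,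
      M.PosSemidef → (N - M).PosSemidef → 0 ≤ L M ∧ L M ≤ L N)
    (h2 : ∀ M N : Matrix (Fin n) (Fin n) ℂ,
      |L (Mᴴ * N)| ^ 2 ≤ L (Mᴴ * M) * L (Nᴴ * N)) :
    ∀ P Q : Matrix (Fin n) (Fin n) ℂ, P.PosDef → Q.PosDef →
      L (geomMean P Q) ≤ Real.sqrt (L P * L Q) := by
  intro P Q hP hQ
  have h : P.PosDef ∧ Q.PosDef := ⟨hP, hQ⟩
  have hs : ((h.1.posSemidef.sqrt⁻¹) * Q * (h.1.posSemidef.sqrt⁻¹)).PosSemidef := by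
    have h1 := h.2.posSemidef.conjTranspose_mul_mul_same (h.1.posSemidef.sqrt⁻¹)
    rwa [Matrix.conjTranspose_nonsing_inv, h.1.posSemidef.posSemidef_sqrt.1.eq] at h1
  have hgm : geomMean P Q = h.1.posSemidef.sqrt * hs.sqrt * h.1.posSemidef.sqrt := by
    rw [geomMean, dif_pos h]
  set R := h.1.posSemidef.sqrt with hR
  set T := hs.sqrt with hT
  have hRherm : Rᴴ = R := h.1.posSemidef.posSemidef_sqrt.1.eq
  have hTherm : Tᴴ = T := hs.posSemidef_sqrt.1.eq
  have hRR : R * R = P := h.1.posSemidef.sqrt_mul_self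
  have hTT : T * T = R⁻¹ * Q * R⁻¹ := hs.sqrt_mul_self
  -- R is invertible
  have hdet : R.det ≠ 0 := by
    intro hd
    have : P.det = 0 := by rw [← hRR, det_mul, hd, mul_zero]
    exact (ne_of_gt hP.det_pos) this
  have hRinv : R * R⁻¹ = 1 := Matrix.mul_nonsing_inv R (isUnit_iff_ne_zero.mpr hdet)
  have hinvR : R⁻¹ * R = 1 := Matrix.nonsing_inv_mul R (isUnit_iff_ne_zero.mpr hdet)
  -- key Cauchy-Schwarz application
  have key := h2 R (T * R)
  have e1 : Rᴴ * (T * R) = geomMean P Q := by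
    rw [hgm, hRherm, mul_assoc]
  have e2 : Rᴴ * R = P := by rw [hRherm, hRR]
  have e3 : (T * R)ᴴ * (T * R) = Q := by
    rw [conjTranspose_mul, hRherm, hTherm]
    calc R * T * (T * R) = R * (T * T) * R := by
          simp only [mul_assoc]
    _ = R * (R⁻¹ * Q * R⁻¹) * R := by rw [hTT]
    _ = (R * R⁻¹) * Q * (R⁻¹ * R) := by simp only [mul_assoc]
    _ = Q := by rw [hRinv, hinvR, one_mul, mul_one]
  rw [e1, e2, e3] at key
  -- geomMean is PSD
  have hgmpsd : (geomMean P Q).PosSemidef := by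
    rw [hgm]
    have := hs.posSemidef_sqrt.conjTranspose_mul_mul_same R
    rwa [hRherm] at this
  have hL0 : 0 ≤ L (geomMean P Q) := (h1 _ (geomMean P Q) hgmpsd (by rw [sub_self]; exact Matrix.PosSemidef.zero)).1
  have habs : L (geomMean P Q) = |L (geomMean P Q)| := (abs_of_nonneg hL0).symm
  rw [habs, Real.le_sqrt (abs_nonneg _)]
  · exact key
  · exact le_trans (by positivity) key
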